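/- Let D be an integral domain with quotient field K and let ⋆ be a semistar operation of D. Then the map ⋏^⋆ on F̄(D[X]) defined by A^{⋏^⋆} := ⋂ { A^★ : ★ a semistar operation of D[X] that is an extension of ⋆ } is a semistar operation of D[X]; it is the smallest semistar operation of D[X] extending ⋆, and moreover it is a strict extension of ⋆. -/
import Mathlib


/- Preliminaries: semistar operations on an integral domain `R` with quotient field `F`
(submodules of `F` over `R`), polynomial extension of semistar operations from `D`
to `D[X]` (viewed inside the quotient field `K(X) = RatFunc K` of `D[X]`). -/

open Polynomial Pointwise

set_option synthInstance.maxHeartbeats 1000000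
set_option maxHeartbeats 1000000

open scoped Classical

noncomputable section

section Generic

variable (R F : Type*) [CommRing R] [Field F] [Algebra R F]

/-- `o` is a semistar operation of `R` (on the nonzero `R`-submodules of the
quotient field `F`). -/
def IsSemistarOp (o : Submodule R F → Submodule R F) : Prop :=
  (∀ x : F, x ≠ 0 → ∀ E : Submodule R F, E ≠ ⊥ → o (x • E) = x • o E) ∧
  (∀ E G : Submodule R F, E ≠ ⊥ → G ≠ ⊥ → E ≤ G → o E ≤ o G) ∧
  (∀ E : Submodule R F, E ≠ ⊥ → E ≤ o E) ∧
  (∀ E : Submodule R F, E ≠ ⊥ → o (o E) = o E)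

/-- The finite-type operation `⋆_f` associated to `⋆`:
`E^{⋆_f} = ⋃ { G^⋆ : G nonzero finitely generated, G ⊆ E }`. -/
def finTypeFun (o : Submodule R F → Submodule R F) : Submodule R F → Submodule R F :=
  fun E => ⨆ (G : Submodule R F) (_ : G ≠ ⊥) (_ : G.FG) (_ : G ≤ E), o G

/-- `⋆` is of finite type, i.e. `⋆ = ⋆_f`. -/
def IsFiniteTypeFun (o : Submodule R F → Submodule R F) : Prop :=
  ∀ E : Submodule R F, E ≠ ⊥ → o E = finTypeFun R F o E

/-- `⋆` is stable: `(E ∩ G)^⋆ = E^⋆ ∩ G^⋆`. -/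
def IsStableFun (o : Submodule R F → Submodule R F) : Prop :=
  ∀ E G : Submodule R F, E ≠ ⊥ → G ≠ ⊥ → o (E ⊓ G) = o E ⊓ o G

/-- An ideal of `R` viewed as an `R`-submodule of `F`. -/
def idealSub (J : Ideal R) : Submodule R F := Submodule.map (Algebra.linearMap R F) J

/-- `(E : J) = { x ∈ F : xJ ⊆ E }` for an ideal `J` of `R`. -/
def colonIdeal (E : Submodule R F) (J : Ideal R) : Submodule R F where
  carrier := { x : F | ∀ a ∈ J, a • x ∈ E }
  add_mem' := fun {x y} hx hy a ha => by
    simpa [smul_add] using E.add_mem (hx a ha) (hy a ha)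
  zero_mem' := fun a _ => by simpa using E.zero_mem
  smul_mem' := fun r x hx a ha => by
    rw [← mul_smul, mul_comm, mul_smul]
    exact E.smul_mem r (hx a ha)

/-- The stable finite-type operation `tilde ⋆` associated to `⋆`:
`E^{tilde ⋆} = ⋃ { (E : J) : J nonzero finitely generated integral ideal with J^⋆ = R^⋆ }`. -/
def tildeFun (o : Submodule R F → Submodule R F) : Submodule R F → Submodule R F :=
  fun E => ⨆ (J : Ideal R) (_ : J ≠ ⊥) (_ : J.FG)
    (_ : o (idealSub R F J) = o (1 : Submodule R F)), colonIdeal R F E J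

/-- The `v`-operation: `E^v = (R : (R : E))` for `E` a nonzero fractional ideal,
and `E^v = F` otherwise. -/
def vFun : Submodule R F → Submodule R F := fun E =>
  if ∃ d : R, d ≠ 0 ∧ ∀ x ∈ E, d • x ∈ (1 : Submodule R F) then
    (1 : Submodule R F) / ((1 : Submodule R F) / E)
  else ⊤

/-- The `eab` operation `⋆_a` associated to `⋆`. -/
def aFun (o : Submodule R F → Submodule R F) : Submodule R F → Submodule R F := fun E =>
  ⨆ (G : Submodule R F) (_ : G ≠ ⊥) (_ : G.FG) (_ : G ≤ E),
    ⨆ (H : Submodule R F) (_ : H ≠ ⊥) (_ : H.FG), o (G * H) / o H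

/-- `I` is a quasi-`⋆`-ideal: a nonzero integral ideal with `I^⋆ ∩ R = I`. -/
def isQuasiIdealFun (o : Submodule R F → Submodule R F) (I : Ideal R) : Prop :=
  I ≠ ⊥ ∧ (o (idealSub R F I)).comap (Algebra.linearMap R F) = I

/-- `I` is a quasi-`⋆`-maximal ideal: maximal among proper quasi-`⋆`-ideals. -/
def isQuasiMaximalFun (o : Submodule R F → Submodule R F) (I : Ideal R) : Prop :=
  isQuasiIdealFun R F o I ∧ I ≠ ⊤ ∧
    ∀ J : Ideal R, isQuasiIdealFun R F o J → J ≠ ⊤ → I ≤ J → I = J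

/-- The `v`-operation relative to an overring `R'` (an `R`-submodule of `F`):
`B ↦ (R' : (R' : B))` for `B` a nonzero fractional ideal of `R'`, `F` otherwise. -/
def vRelFun (R' B : Submodule R F) : Submodule R F :=
  if ∃ z ∈ R', z ≠ 0 ∧ ∀ x ∈ B, z * x ∈ R' then R' / (R' / B) else ⊤

/-- The `t`-operation relative to an overring `R'`: finite-type operation associated to
the `v`-operation of `R'` (the union being over nonzero finitely generated
`R'`-submodules contained in `B`). -/
def tRelFun (R' B : Submodule R F) : Submodule R F :=
  ⨆ (G : Submodule R F) (_ : G ≠ ⊥)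
    (_ : ∃ S : Finset F, G = R' * Submodule.span R (S : Set F)) (_ : G ≤ B),
    vRelFun R F R' G

end Generic

section Poly

variable (D K : Type*) [CommRing D] [IsDomain D] [Field K] [Algebra D K] [IsFractionRing D K]

/-- The canonical ring homomorphism `D[X] → K(X)`. -/
def polyToRF : Polynomial D →+* RatFunc K :=
  (algebraMap (Polynomial K) (RatFunc K)).comp (Polynomial.mapRingHom (algebraMap D K))

/-- `K(X)` is an algebra over `D[X]`; in fact it is the quotient field of `D[X]`. -/
instance (priority := 100) : Algebra (Polynomial D) (RatFunc K) := (polyToRF D K).toAlgebra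

/-- For a `D`-submodule `E` of `K`, the `D[X]`-submodule `E[X]` of `K(X)`:
polynomials all of whose coefficients lie in `E`. -/
def polyExt (E : Submodule D K) : Submodule (Polynomial D) (RatFunc K) where
  carrier := { f : RatFunc K | ∃ p : Polynomial K, (∀ n, p.coeff n ∈ E) ∧
      f = algebraMap (Polynomial K) (RatFunc K) p }
  add_mem' := by
    rintro f g ⟨p, hp, rfl⟩ ⟨q, hq, rfl⟩
    exact ⟨p + q, fun n => by simpa using E.add_mem (hp n) (hq n), by simp⟩
  zero_mem' := ⟨0, fun n => by simpa using E.zero_mem, by simp⟩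
  smul_mem' := by
    rintro c f ⟨p, hp, rfl⟩
    refine ⟨Polynomial.map (algebraMap D K) c * p, fun n => ?_, ?_⟩
    · rw [Polynomial.coeff_mul]
      refine Submodule.sum_mem E fun ij _ => ?_
      rw [Polynomial.coeff_map, ← Algebra.smul_def]
      exact E.smul_mem _ (hp ij.2)
    · rw [Algebra.smul_def, RingHom.algebraMap_toAlgebra, map_mul]
      unfold polyToRF
      simp

/-- The contraction `B ∩ K` of a `D[X]`-submodule `B` of `K(X)` to a `D`-submodule of `K`. -/
def contractToBase (B : Submodule (Polynomial D) (RatFunc K)) : Submodule D K where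
  carrier := { x : K | algebraMap K (RatFunc K) x ∈ B }
  add_mem' := fun {x y} hx hy => by
    simpa [Set.mem_setOf_eq, map_add] using B.add_mem hx hy
  zero_mem' := by simpa using B.zero_mem
  smul_mem' := fun d x hx => by
    have h : algebraMap K (RatFunc K) (d • x)
        = (Polynomial.C d : Polynomial D) • (algebraMap K (RatFunc K) x) := by
      rw [Algebra.smul_def d x, map_mul, Algebra.smul_def, RingHom.algebraMap_toAlgebra]
      unfold polyToRF
      simp only [RingHom.coe_comp, Function.comp_apply, Polynomial.coe_mapRingHom,
        Polynomial.map_C, RatFunc.algebraMap_C, RatFunc.algebraMap_eq_C]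
    show algebraMap K (RatFunc K) (d • x) ∈ B
    rw [h]
    exact B.smul_mem (Polynomial.C d) hx

/-- The content `c_D(S)`: the `D`-submodule of `K` generated by the coefficients of all
polynomials belonging to `S`. -/
def contentOf (S : Set (RatFunc K)) : Submodule D K :=
  Submodule.span D { x : K | ∃ p : Polynomial K,
    algebraMap (Polynomial K) (RatFunc K) p ∈ S ∧ ∃ n, p.coeff n = x }

/-- The semistar operation `▲^⋆_T` of `D[X]` associated to a semistar operation `⋆` of `D`
and an overring `T` of `D`:
`A ↦ ⋂ { z⁻¹ (c_D(zA))^⋆[X] : z ∈ (T[X] : A), z ≠ 0 }` if `(T[X] : A) ≠ 0`, else `A ↦ K(X)`. -/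
def bigTriT (o : Submodule D K → Submodule D K) (T : Subalgebra D K) :
    Submodule (Polynomial D) (RatFunc K) → Submodule (Polynomial D) (RatFunc K) := fun A =>
  if ∃ z : RatFunc K, z ≠ 0 ∧ ∀ a ∈ A, z * a ∈ polyExt D K (Subalgebra.toSubmodule T) then
    ⨅ (z : RatFunc K) (_ : z ≠ 0) (_ : ∀ a ∈ A, z * a ∈ polyExt D K (Subalgebra.toSubmodule T)),
      z⁻¹ • polyExt D K (o (contentOf D K (z • (A : Set (RatFunc K)))))
  else ⊤

/-- `▲^⋆ := ▲^⋆_K`, the largest strict extension of `⋆` to `D[X]`. -/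
def bigTri (o : Submodule D K → Submodule D K) :
    Submodule (Polynomial D) (RatFunc K) → Submodule (Polynomial D) (RatFunc K) :=
  bigTriT D K o ⊤

/-- `b` is an extension of `⋆` to `D[X]` : `E^⋆ = (E[X])^b ∩ K`. -/
def IsExtensionFun (o : Submodule D K → Submodule D K)
    (b : Submodule (Polynomial D) (RatFunc K) → Submodule (Polynomial D) (RatFunc K)) : Prop :=
  ∀ E : Submodule D K, E ≠ ⊥ → o E = contractToBase D K (b (polyExt D K E))

/-- `b` is a strict extension of `⋆` to `D[X]` : `(E[X])^b = E^⋆[X]`. -/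
def IsStrictExtensionFun (o : Submodule D K → Submodule D K)
    (b : Submodule (Polynomial D) (RatFunc K) → Submodule (Polynomial D) (RatFunc K)) : Prop :=
  ∀ E : Submodule D K, E ≠ ⊥ → b (polyExt D K E) = polyExt D K (o E)

/-- `⋏^⋆ : A ↦ ⋂ { A^★ : ★ a semistar operation of D[X] extending ⋆ }`. -/
def curlyFun (o : Submodule D K → Submodule D K) :
    Submodule (Polynomial D) (RatFunc K) → Submodule (Polynomial D) (RatFunc K) := fun A =>
  ⨅ (b : Submodule (Polynomial D) (RatFunc K) → Submodule (Polynomial D) (RatFunc K))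
    (_ : IsSemistarOp (Polynomial D) (RatFunc K) b) (_ : IsExtensionFun D K o b), b A

/-- The localization `D_Q` of `D` at a prime ideal `Q`, as a `D`-submodule of `K`. -/
def locSub (Q : Ideal D) : Submodule D K :=
  Submodule.span D { x : K | ∃ s : D, s ∉ Q ∧ s • x ∈ (1 : Submodule D K) }

/-- The content of an ideal `I` of `D[X]`: the `D`-submodule of `K` generated by the
coefficients of the polynomials in `I`. -/
def contentOfIdeal (I : Ideal (Polynomial D)) : Submodule D K :=
  Submodule.span D { x : K | ∃ p ∈ I, ∃ n, algebraMap D K (Polynomial.coeff p n) = x }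

/-- The Nagata ring `D_Q(X)`, as a subset of `K(X)`: fractions `f/g` with
`f, g ∈ D_Q[X]` and the coefficients of `g` generating the unit ideal of `D_Q`. -/
def nagataSet (Q : Ideal D) : Set (RatFunc K) :=
  { u : RatFunc K | ∃ g : Polynomial K, (∀ n, g.coeff n ∈ locSub D K Q) ∧
      locSub D K Q * Submodule.span D { x : K | ∃ n, g.coeff n = x } = locSub D K Q ∧
      u * algebraMap (Polynomial K) (RatFunc K) g ∈ polyExt D K (locSub D K Q) }

end Poly

/- Auxiliary lemmas for the proof. -/

section Aux

variable {D K : Type*} [CommRing D] [IsDomain D] [Field K] [Algebra D K] [IsFractionRing D K]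

lemma algK_eq (x : K) :
    algebraMap K (RatFunc K) x = algebraMap (Polynomial K) (RatFunc K) (Polynomial.C x) := by
  simp [RatFunc.algebraMap_C, RatFunc.algebraMap_eq_C]

lemma mem_polyExt_iff {E : Submodule D K} (x : K) :
    algebraMap K (RatFunc K) x ∈ polyExt D K E ↔ x ∈ E := by
  constructor
  · rintro ⟨p, hp, hx⟩
    have : Polynomial.C x = p := by
      apply RatFunc.algebraMap_injective K
      rw [← algK_eq, hx]
    have h0 := hp 0
    rw [← this] at h0
    simpa using h0
  · intro hx
    refine ⟨Polynomial.C x, fun n => ?_, algK_eq x⟩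
    by_cases hn : n = 0
    · simpa [hn] using hx
    · simp [Polynomial.coeff_C, hn]

lemma contract_polyExt (E : Submodule D K) : contractToBase D K (polyExt D K E) = E := by
  ext x
  exact mem_polyExt_iff x

lemma mem_contract_iff {B : Submodule (Polynomial D) (RatFunc K)} (x : K) :
    x ∈ contractToBase D K B ↔ algebraMap K (RatFunc K) x ∈ B := Iff.rfl

lemma polyExt_mono {E F : Submodule D K} (h : E ≤ F) : polyExt D K E ≤ polyExt D K F := by
  rintro f ⟨p, hp, rfl⟩
  exact ⟨p, fun n => h (hp n), rfl⟩

lemma polyExt_ne_bot {E : Submodule D K} (hE : E ≠ ⊥) : polyExt D K E ≠ ⊥ := by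
  obtain ⟨e, he, he0⟩ := Submodule.exists_mem_ne_zero_of_ne_bot hE
  intro hb
  have : algebraMap K (RatFunc K) e ∈ polyExt D K E := (mem_polyExt_iff e).2 he
  rw [hb, Submodule.mem_bot] at this
  exact he0 (by simpa using (_root_.map_eq_zero (algebraMap K (RatFunc K))).1 this)

section PtSmul

open Pointwise

variable {R M α : Type*} [CommSemiring R] [AddCommMonoid M] [Module R M]
  [GroupWithZero α] [DistribMulAction α M] [SMulCommClass α R M]

lemma pt_smul_mono (a : α) {S T : Submodule R M} (h : S ≤ T) : a • S ≤ a • T := by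
  intro m hm
  rcases Set.mem_smul_set.1 hm with ⟨s, hs, rfl⟩
  exact Submodule.smul_mem_pointwise_smul _ _ _ (h hs)

lemma pt_mem_smul_iff {a : α} (ha : a ≠ 0) {S : Submodule R M} {m : M} :
    m ∈ a • S ↔ a⁻¹ • m ∈ S := by
  constructor
  · intro hm
    rcases Set.mem_smul_set.1 hm with ⟨s, hs, rfl⟩
    rwa [inv_smul_smul₀ ha]
  · intro hm
    have := Submodule.smul_mem_pointwise_smul _ a S hm
    rwa [smul_inv_smul₀ ha] at this

lemma pt_smul_ne_bot {a : α} (ha : a ≠ 0) {S : Submodule R M} (hS : S ≠ ⊥) : a • S ≠ ⊥ := by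
  obtain ⟨m, hm, hm0⟩ := Submodule.exists_mem_ne_zero_of_ne_bot hS
  intro hb
  have h1 : a • m ∈ a • S := Submodule.smul_mem_pointwise_smul _ _ _ hm
  rw [hb, Submodule.mem_bot] at h1
  exact hm0 (by rw [← inv_smul_smul₀ ha m, h1, smul_zero])

end PtSmul

open Pointwise

/-- The explicit strict extension: closure with respect to the family
`{ z • (E^⋆)[X] : z ∈ K(X)ˣ, E a nonzero D-submodule of K }`. -/
def auxOp (star : Submodule D K → Submodule D K) :
    Submodule (Polynomial D) (RatFunc K) → Submodule (Polynomial D) (RatFunc K) := fun A =>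
  ⨅ (z : RatFunc K) (_ : z ≠ 0) (E : Submodule D K) (_ : E ≠ ⊥)
    (_ : A ≤ z • polyExt D K (star E)), z • polyExt D K (star E)

variable {star : Submodule D K → Submodule D K}

lemma auxOp_le {A : Submodule (Polynomial D) (RatFunc K)} {z : RatFunc K}
    {E : Submodule D K} (hz : z ≠ 0) (hE : E ≠ ⊥) (h : A ≤ z • polyExt D K (star E)) :
    auxOp star A ≤ z • polyExt D K (star E) :=
  iInf_le_of_le z (iInf_le_of_le hz (iInf_le_of_le E (iInf_le_of_le hE (iInf_le _ h))))

lemma le_auxOp {A M : Submodule (Polynomial D) (RatFunc K)}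
    (h : ∀ z : RatFunc K, z ≠ 0 → ∀ E : Submodule D K, E ≠ ⊥ →
      A ≤ z • polyExt D K (star E) → M ≤ z • polyExt D K (star E)) :
    M ≤ auxOp star A :=
  le_iInf fun z => le_iInf fun hz => le_iInf fun E => le_iInf fun hE => le_iInf fun hA =>
    h z hz E hE hA

lemma le_auxOp_self (A : Submodule (Polynomial D) (RatFunc K)) : A ≤ auxOp star A :=
  le_auxOp fun _ _ _ _ h => h

/-- Core computation: any "closed" module containing `E[X]` also contains `E^⋆[X]`. -/
lemma auxOp_term (hstar : IsSemistarOp D K star) {E : Submodule D K} (hE : E ≠ ⊥)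
    {z : RatFunc K} (hz : z ≠ 0) {E' : Submodule D K} (hE' : E' ≠ ⊥)
    (h : polyExt D K E ≤ z • polyExt D K (star E')) :
    polyExt D K (star E) ≤ z • polyExt D K (star E') := by
  obtain ⟨hsmul, hmono, hsub, hidem⟩ := hstar
  obtain ⟨e, he, he0⟩ := Submodule.exists_mem_ne_zero_of_ne_bot hE
  have hstarE'ne : star E' ≠ ⊥ := fun hb => hE' (le_bot_iff.1 (hb ▸ hsub E' hE'))
  -- obtain the polynomial representing z⁻¹
  have h1 : z⁻¹ • algebraMap K (RatFunc K) e ∈ polyExt D K (star E') :=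
    (pt_mem_smul_iff hz).1 (h ((mem_polyExt_iff e).2 he))
  obtain ⟨q, hq, hqe⟩ := h1
  have hqe' : z⁻¹ * algebraMap K (RatFunc K) e = algebraMap (Polynomial K) (RatFunc K) q := by
    simpa [smul_eq_mul] using hqe
  set w : Polynomial K := Polynomial.C e⁻¹ * q with hwdef
  have hw : z⁻¹ = algebraMap (Polynomial K) (RatFunc K) w := by
    rw [hwdef, map_mul, ← hqe', ← algK_eq]
    rw [← mul_assoc, mul_comm (algebraMap K (RatFunc K) e⁻¹) z⁻¹, mul_assoc,
      ← map_mul, inv_mul_cancel₀ he0, map_one, mul_one]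
  -- coefficients of w multiply E into star E'
  have hcoeff : ∀ d ∈ E, ∀ i, d * w.coeff i ∈ star E' := by
    intro d hd i
    have hmem : z⁻¹ • algebraMap K (RatFunc K) d ∈ polyExt D K (star E') :=
      (pt_mem_smul_iff hz).1 (h ((mem_polyExt_iff d).2 hd))
    obtain ⟨q', hq', hq'e⟩ := hmem
    have heq : w * Polynomial.C d = q' := by
      apply RatFunc.algebraMap_injective K
      rw [map_mul, ← hw, ← algK_eq]
      simpa [smul_eq_mul] using hq'e
    have := hq' i
    rw [← heq, Polynomial.coeff_mul_C] at this
    rwa [mul_comm]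
  -- coefficients of w multiply star E into star E'
  have hkey : ∀ i, ∀ x ∈ star E, w.coeff i * x ∈ star E' := by
    intro i x hx
    by_cases hc : w.coeff i = 0
    · simpa [hc] using (star E').zero_mem
    · set c := w.coeff i with hcdef
      have hcE : c • E ≤ star E' := by
        intro y hy
        rcases Set.mem_smul_set.1 hy with ⟨d, hd, rfl⟩
        simpa [smul_eq_mul, mul_comm] using hcoeff d hd i
      have h3 : star (c • E) ≤ star (star E') :=
        hmono _ _ (pt_smul_ne_bot hc hE) hstarE'ne hcE
      rw [hsmul c hc E hE, hidem E' hE'] at h3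
      have hmem : c • x ∈ c • star E := Submodule.smul_mem_pointwise_smul _ _ _ hx
      simpa [smul_eq_mul] using h3 hmem
  rintro f ⟨p, hp, rfl⟩
  rw [pt_mem_smul_iff hz]
  refine ⟨w * p, fun n => ?_, ?_⟩
  · rw [Polynomial.coeff_mul]
    exact Submodule.sum_mem _ fun ij _ => hkey ij.1 _ (hp ij.2)
  · rw [map_mul, ← hw, smul_eq_mul]

lemma auxOp_polyExt (hstar : IsSemistarOp D K star) {E : Submodule D K} (hE : E ≠ ⊥) :
    auxOp star (polyExt D K E) = polyExt D K (star E) := by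
  refine le_antisymm ?_ (le_auxOp fun z hz E' hE' h => auxOp_term hstar hE hz hE' h)
  have h1 : polyExt D K E ≤ (1 : RatFunc K) • polyExt D K (star E) := by
    rw [one_smul]
    exact polyExt_mono (hstar.2.2.1 E hE)
  have := auxOp_le (z := (1 : RatFunc K)) one_ne_zero hE h1
  rwa [one_smul] at this

lemma auxOp_semistar (hstar : IsSemistarOp D K star) :
    IsSemistarOp (Polynomial D) (RatFunc K) (auxOp star) := by
  have hsm : ∀ x : RatFunc K, x ≠ 0 → ∀ A : Submodule (Polynomial D) (RatFunc K),
      x • auxOp star A ≤ auxOp star (x • A) := by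
    intro x hx A
    refine le_auxOp fun z hz E hE h => ?_
    have hA : A ≤ (x⁻¹ * z) • polyExt D K (star E) := by
      have := pt_smul_mono x⁻¹ h
      rwa [inv_smul_smul₀ hx, smul_smul] at this
    have h2 := pt_smul_mono x (auxOp_le (star := star)
      (mul_ne_zero (inv_ne_zero hx) hz) hE hA)
    rwa [smul_smul, ← mul_assoc, mul_inv_cancel₀ hx, one_mul] at h2
  refine ⟨?_, ?_, fun A _ => le_auxOp_self A, ?_⟩
  · intro x hx A _
    refine le_antisymm ?_ (hsm x hx A)
    have := hsm x⁻¹ (inv_ne_zero hx) (x • A)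
    rw [inv_smul_smul₀ hx] at this
    have h2 := pt_smul_mono x this
    rwa [smul_inv_smul₀ hx] at h2
  · intro A B _ _ hAB
    exact le_auxOp fun z hz E hE h => auxOp_le hz hE (le_trans hAB h)
  · intro A _
    refine le_antisymm ?_ (le_auxOp_self _)
    exact le_auxOp fun z hz E hE h => auxOp_le hz hE (auxOp_le hz hE h)

lemma auxOp_ext (hstar : IsSemistarOp D K star) : IsExtensionFun D K star (auxOp star) := by
  intro E hE
  rw [auxOp_polyExt hstar hE, contract_polyExt]

lemma curly_le {A : Submodule (Polynomial D) (RatFunc K)}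
    {b : Submodule (Polynomial D) (RatFunc K) → Submodule (Polynomial D) (RatFunc K)}
    (hb : IsSemistarOp (Polynomial D) (RatFunc K) b) (hbe : IsExtensionFun D K star b) :
    curlyFun D K star A ≤ b A :=
  iInf_le_of_le b (iInf_le_of_le hb (iInf_le _ hbe))

lemma le_curly {A M : Submodule (Polynomial D) (RatFunc K)}
    (h : ∀ b : Submodule (Polynomial D) (RatFunc K) → Submodule (Polynomial D) (RatFunc K),
      IsSemistarOp (Polynomial D) (RatFunc K) b → IsExtensionFun D K star b → M ≤ b A) :
    M ≤ curlyFun D K star A :=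
  le_iInf fun b => le_iInf fun hb => le_iInf fun hbe => h b hb hbe

/-- Any extension of `⋆` satisfies `E^⋆[X] ≤ (E[X])^★`. -/
lemma polyExt_star_le_ext (hstar : IsSemistarOp D K star)
    {b : Submodule (Polynomial D) (RatFunc K) → Submodule (Polynomial D) (RatFunc K)}
    (hbe : IsExtensionFun D K star b) {E : Submodule D K} (hE : E ≠ ⊥) :
    polyExt D K (star E) ≤ b (polyExt D K E) := by
  rintro f ⟨p, hp, rfl⟩
  have hx : ∀ n, algebraMap K (RatFunc K) (p.coeff n) ∈ b (polyExt D K E) := by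
    intro n
    have : p.coeff n ∈ contractToBase D K (b (polyExt D K E)) := by
      rw [← hbe E hE]; exact hp n
    exact this
  have hdecomp : (algebraMap (Polynomial K) (RatFunc K)) p =
      ∑ n ∈ Finset.range (p.natDegree + 1),
        ((Polynomial.X : Polynomial D) ^ n) • algebraMap K (RatFunc K) (p.coeff n) := by
    conv_lhs => rw [Polynomial.as_sum_range p]
    rw [map_sum]
    refine Finset.sum_congr rfl fun n _ => ?_
    rw [Algebra.smul_def, RingHom.algebraMap_toAlgebra]
    unfold polyToRF
    rw [RingHom.comp_apply, Polynomial.coe_mapRingHom, Polynomial.map_pow, Polynomial.map_X,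
      algK_eq, ← map_mul, Polynomial.X_pow_mul, Polynomial.C_mul_X_pow_eq_monomial]
  rw [hdecomp]
  exact Submodule.sum_mem _ fun n _ => Submodule.smul_mem _ _ (hx n)

lemma curly_strict (hstar : IsSemistarOp D K star) :
    IsStrictExtensionFun D K star (curlyFun D K star) := by
  intro E hE
  refine le_antisymm ?_ (le_curly fun b hb hbe => polyExt_star_le_ext hstar hbe hE)
  have := curly_le (star := star) (auxOp_semistar hstar) (auxOp_ext hstar)
    (A := polyExt D K E)
  rwa [auxOp_polyExt hstar hE] at this

end Aux
/- The theorem. -/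

theorem curly_smallest_extension (D K : Type*) [CommRing D] [IsDomain D] [Field K] [Algebra D K] [IsFractionRing D K]
    (star : Submodule D K → Submodule D K) (hstar : IsSemistarOp D K star) :
    IsSemistarOp (Polynomial D) (RatFunc K) (curlyFun D K star) ∧
    IsExtensionFun D K star (curlyFun D K star) ∧
    (∀ b : Submodule (Polynomial D) (RatFunc K) → Submodule (Polynomial D) (RatFunc K),
      IsSemistarOp (Polynomial D) (RatFunc K) b → IsExtensionFun D K star b →
      ∀ A : Submodule (Polynomial D) (RatFunc K), A ≠ ⊥ → curlyFun D K star A ≤ b A) ∧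
    IsStrictExtensionFun D K star (curlyFun D K star) := by
  have hcs := curly_strict (star := star) hstar
  have hext : IsExtensionFun D K star (curlyFun D K star) := by
    intro E hE
    rw [hcs E hE, contract_polyExt]
  have hsmall : ∀ b : Submodule (Polynomial D) (RatFunc K) → Submodule (Polynomial D) (RatFunc K),
      IsSemistarOp (Polynomial D) (RatFunc K) b → IsExtensionFun D K star b →
      ∀ A : Submodule (Polynomial D) (RatFunc K), A ≠ ⊥ → curlyFun D K star A ≤ b A :=
    fun b hb hbe A _ => curly_le hb hbe
  have hle_self : ∀ A : Submodule (Polynomial D) (RatFunc K), A ≠ ⊥ →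
      A ≤ curlyFun D K star A :=
    fun A hA => le_curly fun b hb _ => hb.2.2.1 A hA
  refine ⟨⟨?_, ?_, hle_self, ?_⟩, hext, hsmall, hcs⟩
  · -- scaling
    have hsm : ∀ x : RatFunc K, x ≠ 0 → ∀ A : Submodule (Polynomial D) (RatFunc K), A ≠ ⊥ →
        x • curlyFun D K star A ≤ curlyFun D K star (x • A) := by
      intro x hx A hA
      refine le_curly fun b hb hbe => ?_
      rw [hb.1 x hx A hA]
      exact pt_smul_mono x (curly_le hb hbe)
    intro x hx A hA
    refine le_antisymm ?_ (hsm x hx A hA)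
    have h1 := hsm x⁻¹ (inv_ne_zero hx) (x • A) (pt_smul_ne_bot hx hA)
    rw [inv_smul_smul₀ hx] at h1
    have h2 := pt_smul_mono x h1
    rwa [smul_inv_smul₀ hx] at h2
  · -- monotone
    intro A B hA hB hAB
    exact le_curly fun b hb hbe => le_trans (curly_le hb hbe) (hb.2.1 A B hA hB hAB)
  · -- idempotent
    intro A hA
    have hcne : curlyFun D K star A ≠ ⊥ :=
      fun hb0 => hA (le_bot_iff.1 (hb0 ▸ hle_self A hA))
    refine le_antisymm ?_ (hle_self _ hcne)
    refine le_curly fun b hb hbe => ?_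
    have hbAne : b A ≠ ⊥ := fun h0 => hA (le_bot_iff.1 (h0 ▸ hb.2.2.1 A hA))
    have h2 : b (curlyFun D K star A) ≤ b (b A) :=
      hb.2.1 _ _ hcne hbAne (curly_le hb hbe)
    rw [hb.2.2.2 A hA] at h2
    exact le_trans (curly_le hb hbe) h2
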